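/- Let d ∈ ℕ, s, α, β, γ, θ ∈ ℝ, p ∈ (0,∞), q ∈ (0,∞], and assume Property A holds. Then there is a constant C > 0, independent of the family (ξ_{j,t,m}), such that for every family (ξ_{j,t,m})_{j∈ℕ₀, t∈{F,M}^d, m∈ℤ^d} of real numbers, the sequence a = (a_{j,t,m})_{(j,t,m)∈J} defined by a_{j,t,m} := 2^{jα} (j+1)^θ (1 + ‖m‖_∞/2^j)^{β + (γ−β)·𝟙_{j=0}} ξ_{j,t,m} satisfies ‖a‖_{b^s_{p,q}} ≤ C · Ξ^{1/p} (an inequality in [0,∞]). -/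

import Mathlib

open MeasureTheory ProbabilityTheory ENNReal

noncomputable section

/-- The sup-norm `‖m‖_∞` of a lattice point `m ∈ ℤ^d`, as a real number. -/
def znorm {d : ℕ} (m : Fin d → ℤ) : ℝ :=
  ((Finset.univ.sup fun i => (m i).natAbs : ℕ) : ℝ)

/-- `M_j = (2^{j+1}+1)^d`. -/
def Mnum (d j : ℕ) : ℕ := (2 ^ (j + 1) + 1) ^ d

/-- `N_j = M_{j+1} - M_j`. -/
def Nnum (d j : ℕ) : ℕ := Mnum d (j + 1) - Mnum d j

/-- The `ℓ^p`-norm (with values in `[0,∞]`) of a family of values in `[0,∞]`,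
for `p ∈ (0,∞]`. -/
def lpNorm (p : ℝ≥0∞) {ι : Type*} (x : ι → ℝ≥0∞) : ℝ≥0∞ :=
  if p = ∞ then ⨆ i, x i else (∑' i, x i ^ p.toReal) ^ (1 / p.toReal)

/-- The index set `{(j,t) : j ∈ ℕ₀, t ∈ T_j}` where `T_0 = {F}^d` and
`T_j = {F,M}^d \ {F}^d` for `j ≥ 1`; here `F = false`, `M = true`. -/
def JIdx (d : ℕ) : Type :=
  {jt : ℕ × (Fin d → Bool) // (jt.2 = fun _ => false) ↔ jt.1 = 0}

/-- The Besov sequence (quasi-)norm `‖a‖_{b^s_{p,q}}`, with values in `[0,∞]`,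
where `d/p` is read as `0` for `p = ∞`. -/
def besovNorm (d : ℕ) (s : ℝ) (p q : ℝ≥0∞)
    (a : ℕ → (Fin d → Bool) → (Fin d → ℤ) → ℝ) : ℝ≥0∞ :=
  lpNorm q (fun jt : JIdx d =>
    ENNReal.ofReal ((2 : ℝ) ^ ((jt.1.1 : ℝ) * (s + d / 2 - d * (p⁻¹).toReal))) *
      lpNorm p fun m : Fin d → ℤ => ENNReal.ofReal |a jt.1.1 jt.1.2 m|)

/-- The deterministic coefficient `2^{jα} (j+1)^θ (1+‖m‖_∞/2^j)^{β+(γ-β)𝟙_{j=0}}`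
of the Besov sequence prior. -/
def priorCoef (d : ℕ) (α β γ θ : ℝ) (j : ℕ) (m : Fin d → ℤ) : ℝ :=
  (2 : ℝ) ^ ((j : ℝ) * α) * ((j : ℝ) + 1) ^ θ *
    (1 + znorm m / 2 ^ j) ^ (if j = 0 then γ else β)

/-- The deterministic coefficient `2^{jα} (1+‖m‖_∞/2^j)^{β+(γ-β)𝟙_{j=0}}`
of the Bernoulli–Besov sequence prior. -/
def priorCoefB (d : ℕ) (α β γ : ℝ) (j : ℕ) (m : Fin d → ℤ) : ℝ :=
  (2 : ℝ) ^ ((j : ℝ) * α) * (1 + znorm m / 2 ^ j) ^ (if j = 0 then γ else β)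

/-- The Bernoulli success probability `ϱ_{j,m} = 2^{jμ}(1+‖m‖_∞/2^j)^ν`. -/
def rhoB (d : ℕ) (μ' ν : ℝ) (j : ℕ) (m : Fin d → ℤ) : ℝ :=
  (2 : ℝ) ^ ((j : ℝ) * μ') * (1 + znorm m / 2 ^ j) ^ ν

/-- Property A. -/
def PropertyA (d : ℕ) (s α β γ θ : ℝ) (p q : ℝ≥0∞) : Prop :=
  (if p = ∞ then γ ≤ 0 else γ < -((d : ℝ) / p.toReal)) ∧
  (if p = ∞ then β ≤ 0 else β < -((d : ℝ) / p.toReal)) ∧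
  (s + d / 2 + α < 0 ∨
    (s + d / 2 + α = 0 ∧ (if q = ∞ then θ ≤ 0 else θ < -(1 / q.toReal))))

/-- Property A'. -/
def PropertyA' (d : ℕ) (s α β γ μ' ν : ℝ) (p q : ℝ≥0∞) : Prop :=
  if p = ∞ then
    γ ≤ 0 ∧ β ≤ 0 ∧
      (if q = ∞ then s + d / 2 + α ≤ 0 else s + d / 2 + α < 0)
  else
    γ + (d + ν) / p.toReal < 0 ∧ β + (d + ν) / p.toReal < 0 ∧
      (if q = ∞ then s + d / 2 + α + μ' / p.toReal ≤ 0
        else s + d / 2 + α + μ' / p.toReal < 0)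

/-- Property A''. -/
def PropertyA'' (d : ℕ) (s α β γ μ' ν r : ℝ) (p : ℝ≥0∞) : Prop :=
  if p = ∞ then γ ≤ 0 ∧ β ≤ 0 ∧ s + d / 2 + α ≤ 0
  else
    γ + (d : ℝ) / p.toReal + ν / max r p.toReal < 0 ∧
    β + (d : ℝ) / p.toReal + ν / max r p.toReal < 0 ∧
    s + (d : ℝ) / 2 + α + μ' / max r p.toReal < 0

/-- The quantity `Ξ = max_t Ξ_t` from the master lemma, for a deterministic family `ξ`,
an exponent `pr ∈ (0,∞)` and an enumeration `φ` of `ℤ^d`. -/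
def XiQ (d : ℕ) (pr : ℝ) (φ : ℕ → Fin d → ℤ)
    (ξ : ℕ → (Fin d → Bool) → (Fin d → ℤ) → ℝ) : ℝ≥0∞ :=
  ⨆ t : Fin d → Bool, ⨆ j : ℕ,
    (ENNReal.ofReal ((Mnum d j : ℝ)⁻¹ *
        ∑ τ ∈ Finset.range (Mnum d j), |ξ j t (φ τ)| ^ pr) +
      ⨆ ℓ : ℕ, ⨆ _ : j ≤ ℓ,
        ENNReal.ofReal ((Nnum d ℓ : ℝ)⁻¹ *
          ∑ τ ∈ Finset.Ico (Mnum d ℓ) (Mnum d (ℓ + 1)), |ξ j t (φ τ)| ^ pr))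

/-- The quantity `Ξ̃ = max_t Ξ̃_t` from the Bernoulli master lemma. -/
def XiB (d : ℕ) (pr r μ' ν δ : ℝ) (φ : ℕ → Fin d → ℤ)
    (lam ξ : ℕ → (Fin d → Bool) → (Fin d → ℤ) → ℝ) : ℝ≥0∞ :=
  ⨆ t : Fin d → Bool, ⨆ j : ℕ,
    (ENNReal.ofReal ((Mnum d j : ℝ)⁻¹ *
        ∑ τ ∈ Finset.range (Mnum d j),
          rhoB d μ' ν j (φ τ) ^ (pr / max r pr * (δ - 1)) * lam j t (φ τ) *
            |ξ j t (φ τ)| ^ pr) +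
      ⨆ ℓ : ℕ, ⨆ _ : j ≤ ℓ,
        ENNReal.ofReal ((Nnum d ℓ : ℝ)⁻¹ *
          ∑ τ ∈ Finset.Ico (Mnum d ℓ) (Mnum d (ℓ + 1)),
            rhoB d μ' ν j (φ τ) ^ (pr / max r pr * (δ - 1)) * lam j t (φ τ) *
              |ξ j t (φ τ)| ^ pr))

/-- `exp(c · x^r)` for `x ∈ [0,∞]`, equal to `∞` for `x = ∞`. -/
def expENN (c r : ℝ) (x : ℝ≥0∞) : ℝ≥0∞ :=
  if x = ∞ then ∞ else ENNReal.ofReal (Real.exp (c * x.toReal ^ r))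


def nnorm {d : ℕ} (m : Fin d → ℤ) : ℕ := Finset.univ.sup fun i => (m i).natAbs

lemma znorm_eq {d : ℕ} (m : Fin d → ℤ) : znorm m = (nnorm m : ℝ) := rfl

lemma znorm_nonneg {d : ℕ} (m : Fin d → ℤ) : 0 ≤ znorm m := Nat.cast_nonneg _

lemma card_ball (d R : ℕ) :
    (Fintype.piFinset (fun _ : Fin d => Finset.Icc (-(R:ℤ)) R)).card = (2*R+1)^d := by
  rw [Fintype.card_piFinset]
  simp [Int.card_Icc]
  congr 1
  omega

lemma mem_ball_iff {d R : ℕ} (m : Fin d → ℤ) :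
    m ∈ Fintype.piFinset (fun _ : Fin d => Finset.Icc (-(R:ℤ)) R) ↔ nnorm m ≤ R := by
  simp only [Fintype.mem_piFinset, Finset.mem_Icc, nnorm, Finset.sup_le_iff, Finset.mem_univ,
    forall_true_left]
  constructor
  · intro h i; have := h i; omega
  · intro h i; have := h i; omega

lemma Mnum_mono (d : ℕ) : Monotone (Mnum d) := by
  intro a b hab
  exact Nat.pow_le_pow_left (by have := Nat.pow_le_pow_right (by norm_num : 1 ≤ 2) (Nat.add_le_add_right hab 1); omega) d

lemma Mnum_eq (d ℓ : ℕ) : Mnum d ℓ = (2 * 2^ℓ + 1)^d := by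
  rw [Mnum]; congr 1; ring

lemma lt_nnorm_of_ge (d : ℕ) (φ : ℕ → Fin d → ℤ) (hb : Function.Bijective φ)
    (hm : Monotone fun τ => znorm (φ τ)) (ℓ τ : ℕ) (h : Mnum d ℓ ≤ τ) :
    2 ^ ℓ < nnorm (φ τ) := by
  by_contra hcon
  push_neg at hcon
  set e := Equiv.ofBijective φ hb with he
  set R : ℕ := 2^ℓ with hR
  set B := Fintype.piFinset (fun _ : Fin d => Finset.Icc (-(R:ℤ)) R) with hB
  have hcardB : B.card = Mnum d ℓ := by
    rw [hB, card_ball, Mnum_eq]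
  set S := B.image e.symm with hS
  have hcardS : S.card = Mnum d ℓ := by
    rw [hS, Finset.card_image_of_injective _ e.symm.injective, hcardB]
  have hmem : ∀ τ' : ℕ, τ' ∈ S ↔ nnorm (φ τ') ≤ R := by
    intro τ'
    rw [hS, Finset.mem_image]
    constructor
    · rintro ⟨b, hbB, rfl⟩
      have hb' : φ (e.symm b) = b := e.apply_symm_apply b
      rw [← mem_ball_iff (R := R), hb']
      exact hbB
    · intro hn
      exact ⟨φ τ', (mem_ball_iff _).2 hn, e.symm_apply_apply τ'⟩
  have hsub : Finset.range (τ+1) ⊆ S := by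
    intro τ' hτ'
    rw [Finset.mem_range] at hτ'
    rw [hmem]
    have h1 : znorm (φ τ') ≤ znorm (φ τ) := hm (by omega)
    rw [znorm_eq, znorm_eq, Nat.cast_le] at h1
    omega
  have := Finset.card_le_card hsub
  rw [Finset.card_range, hcardS] at this
  omega

lemma Nnum_pos (d : ℕ) (hd : 0 < d) (ℓ : ℕ) : 0 < Nnum d ℓ := by
  have h2 : (2:ℕ) ^ (ℓ+1) < 2 ^ (ℓ+1+1) := Nat.pow_lt_pow_right (by norm_num) (by omega)
  have : Mnum d ℓ < Mnum d (ℓ+1) := Nat.pow_lt_pow_left (by omega) (by omega)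
  rw [Nnum]; omega

lemma Mnum_le (d j : ℕ) : Mnum d j ≤ 2 ^ ((j+3)*d) := by
  rw [Mnum, pow_mul]
  apply Nat.pow_le_pow_left
  have := Nat.pow_lt_pow_right (by norm_num : 1 < 2) (by omega : j + 1 < j + 3)
  omega

lemma Nnum_le (d j : ℕ) : Nnum d j ≤ 2 ^ ((j+4)*d) := by
  have h := Mnum_le d (j+1)
  rw [show j+1+3 = j+4 by omega] at h
  rw [Nnum]; omega

lemma le_Mnum (d : ℕ) (hd : 0 < d) (j N : ℕ) : N ≤ Mnum d (j + N) := by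
  calc N ≤ 2 ^ (j + N + 1) + 1 := by
        have := Nat.lt_two_pow_self (n := N)
        have := Nat.pow_le_pow_right (by norm_num : 1 ≤ 2) (by omega : N ≤ j + N + 1)
        omega
    _ ≤ Mnum d (j + N) := Nat.le_self_pow (by omega) _

lemma le_XiQ_one (d : ℕ) (pr : ℝ) (φ : ℕ → Fin d → ℤ)
    (ξ : ℕ → (Fin d → Bool) → (Fin d → ℤ) → ℝ) (j : ℕ) (t : Fin d → Bool) :
    ENNReal.ofReal ((Mnum d j : ℝ)⁻¹ *
        ∑ τ ∈ Finset.range (Mnum d j), |ξ j t (φ τ)| ^ pr) ≤ XiQ d pr φ ξ := by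
  exact le_iSup_of_le t (le_iSup_of_le j le_self_add)

lemma le_XiQ_two (d : ℕ) (pr : ℝ) (φ : ℕ → Fin d → ℤ)
    (ξ : ℕ → (Fin d → Bool) → (Fin d → ℤ) → ℝ) (j ℓ : ℕ) (hjl : j ≤ ℓ) (t : Fin d → Bool) :
    ENNReal.ofReal ((Nnum d ℓ : ℝ)⁻¹ *
        ∑ τ ∈ Finset.Ico (Mnum d ℓ) (Mnum d (ℓ + 1)), |ξ j t (φ τ)| ^ pr) ≤ XiQ d pr φ ξ := by
  refine le_iSup_of_le t (le_iSup_of_le j (le_trans ?_ le_add_self))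
  exact le_iSup_of_le ℓ (le_iSup_of_le hjl le_rfl)

lemma sum_range_Mnum (d j n : ℕ) (f : ℕ → ℝ≥0∞) :
    ∑ τ ∈ Finset.range (Mnum d (j+n)), f τ =
      ∑ τ ∈ Finset.range (Mnum d j), f τ +
        ∑ k ∈ Finset.range n, ∑ τ ∈ Finset.Ico (Mnum d (j+k)) (Mnum d (j+k+1)), f τ := by
  induction n with
  | zero => simp
  | succ n ih =>
    have hsplit : ∑ τ ∈ Finset.range (Mnum d (j+n+1)), f τ =
        ∑ τ ∈ Finset.range (Mnum d (j+n)), f τ +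
          ∑ τ ∈ Finset.Ico (Mnum d (j+n)) (Mnum d (j+n+1)), f τ := by
      rw [Finset.range_eq_Ico, Finset.range_eq_Ico]
      exact (Finset.sum_Ico_consecutive f (Nat.zero_le _)
        (Mnum_mono d (by omega : j + n ≤ j + n + 1))).symm
    rw [show j+(n+1)=j+n+1 from rfl, hsplit, ih, Finset.sum_range_succ, add_assoc]

lemma two_pow_nat_cast (a : ℕ) : ((2^a : ℕ) : ℝ) = (2:ℝ)^((a:ℕ):ℝ) := by
  rw [Real.rpow_natCast]; push_cast; ring

lemma inner_sum_bound (d : ℕ) (hd : 0 < d) (P E : ℝ) (hP : 0 < P) (hEd : (d:ℝ) + E * P < 0)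
    (φ : ℕ → Fin d → ℤ) (hb : Function.Bijective φ) (hm : Monotone fun τ => znorm (φ τ))
    (ξ : ℕ → (Fin d → Bool) → (Fin d → ℤ) → ℝ) (j : ℕ) (t : Fin d → Bool) :
    ∑' m : Fin d → ℤ, ENNReal.ofReal (|(1 + znorm m / 2^j)^E * ξ j t m| ^ P)
      ≤ ENNReal.ofReal ((2:ℝ)^(5*(d:ℝ) + (j:ℝ)*(d:ℝ)) *
          (1 + (1 - (2:ℝ)^((d:ℝ) + E*P))⁻¹)) * XiQ d P φ ξ := by
  have hd0 : (0:ℝ) ≤ d := Nat.cast_nonneg d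
  have hE : E < 0 := by nlinarith
  set r : ℝ := (2:ℝ)^((d:ℝ) + E*P) with hrdef
  have hr0 : 0 < r := Real.rpow_pos_of_pos two_pos _
  have hr1 : r < 1 := Real.rpow_lt_one_of_one_lt_of_neg one_lt_two hEd
  set K : ℝ := (2:ℝ)^(5*(d:ℝ) + (j:ℝ)*(d:ℝ)) with hKdef
  have hK0 : 0 < K := Real.rpow_pos_of_pos two_pos _
  set Ξ := XiQ d P φ ξ with hXi
  set w : (Fin d → ℤ) → ℝ := fun m => (1 + znorm m / 2^j)^E with hwdef
  have hbase : ∀ m : Fin d → ℤ, (1:ℝ) ≤ 1 + znorm m / 2^j := by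
    intro m
    have h1 := znorm_nonneg m
    have h2 : (0:ℝ) < 2^j := by positivity
    have := div_nonneg h1 h2.le
    linarith
  have hw_pos : ∀ m, 0 < w m := fun m => Real.rpow_pos_of_pos (by linarith [hbase m]) _
  have hw_le_one : ∀ m, w m ≤ 1 :=
    fun m => Real.rpow_le_one_of_one_le_of_nonpos (hbase m) hE.le
  set F : (Fin d → ℤ) → ℝ≥0∞ := fun m => ENNReal.ofReal (|w m * ξ j t m| ^ P) with hFdef
  have htsum : ∑' m : Fin d → ℤ, F m = ∑' τ : ℕ, F (φ τ) :=
    ((Equiv.ofBijective φ hb).tsum_eq F).symm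
  show ∑' m, F m ≤ ENNReal.ofReal (K * (1 + (1-r)⁻¹)) * Ξ
  rw [htsum]
  apply ENNReal.tsum_le_of_sum_range_le
  intro N
  have hsplit : ∀ m, |w m * ξ j t m| ^ P = w m ^ P * |ξ j t m| ^ P := by
    intro m
    rw [abs_mul, abs_of_pos (hw_pos m), Real.mul_rpow (hw_pos m).le (abs_nonneg _)]
  -- central block
  have hcentral : ∑ τ ∈ Finset.range (Mnum d j), F (φ τ) ≤ ENNReal.ofReal K * Ξ := by
    have hMpos : (0:ℝ) < (Mnum d j : ℝ) := by
      have : 0 < Mnum d j := Nat.pow_pos (by positivity)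
      exact_mod_cast this
    calc ∑ τ ∈ Finset.range (Mnum d j), F (φ τ)
        ≤ ∑ τ ∈ Finset.range (Mnum d j), ENNReal.ofReal (|ξ j t (φ τ)| ^ P) := by
          apply Finset.sum_le_sum
          intro τ _
          apply ENNReal.ofReal_le_ofReal
          rw [hsplit]
          have h1 : w (φ τ) ^ P ≤ 1 :=
            Real.rpow_le_one (hw_pos _).le (hw_le_one _) hP.le
          nlinarith [Real.rpow_nonneg (abs_nonneg (ξ j t (φ τ))) P,
            Real.rpow_nonneg (hw_pos (φ τ)).le P]
      _ = ENNReal.ofReal (∑ τ ∈ Finset.range (Mnum d j), |ξ j t (φ τ)| ^ P) := by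
          rw [ENNReal.ofReal_sum_of_nonneg]
          intro τ _
          exact Real.rpow_nonneg (abs_nonneg _) _
      _ = ENNReal.ofReal (Mnum d j : ℝ) * ENNReal.ofReal ((Mnum d j : ℝ)⁻¹ *
            ∑ τ ∈ Finset.range (Mnum d j), |ξ j t (φ τ)| ^ P) := by
          rw [← ENNReal.ofReal_mul hMpos.le]
          congr 1
          field_simp
      _ ≤ ENNReal.ofReal (Mnum d j : ℝ) * Ξ := mul_le_mul_right (le_XiQ_one d P φ ξ j t) _
      _ ≤ ENNReal.ofReal K * Ξ := by
          apply mul_le_mul_left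
          apply ENNReal.ofReal_le_ofReal
          calc (Mnum d j : ℝ) ≤ ((2^((j+3)*d) : ℕ) : ℝ) := by exact_mod_cast Mnum_le d j
            _ = (2:ℝ)^((((j+3)*d:ℕ)):ℝ) := two_pow_nat_cast _
            _ ≤ K := by
                apply Real.rpow_le_rpow_of_exponent_le one_le_two
                push_cast
                nlinarith
  -- shell blocks
  have hblock : ∀ k : ℕ, ∑ τ ∈ Finset.Ico (Mnum d (j+k)) (Mnum d (j+k+1)), F (φ τ) ≤
      ENNReal.ofReal K * ENNReal.ofReal (r^k) * Ξ := by
    intro k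
    have hNpos : (0:ℝ) < (Nnum d (j+k) : ℝ) := by exact_mod_cast Nnum_pos d hd (j+k)
    have hwk : ∀ τ ∈ Finset.Ico (Mnum d (j+k)) (Mnum d (j+k+1)),
        w (φ τ) ^ P ≤ ((2:ℝ)^k) ^ (E*P) := by
      intro τ hτ
      rw [Finset.mem_Ico] at hτ
      have hlt : 2^(j+k) < nnorm (φ τ) := lt_nnorm_of_ge d φ hb hm (j+k) τ hτ.1
      have hz : (2:ℝ)^(j+k) ≤ znorm (φ τ) := by
        rw [znorm_eq]
        have h := hlt.le
        calc (2:ℝ)^(j+k) = ((2^(j+k) : ℕ) : ℝ) := by push_cast; ring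
          _ ≤ (nnorm (φ τ) : ℝ) := by exact_mod_cast h
      have h2j : (0:ℝ) < 2^j := by positivity
      have hbk : (2:ℝ)^k ≤ 1 + znorm (φ τ) / 2^j := by
        have he : (2:ℝ)^k = (2:ℝ)^(j+k) / 2^j := by
          rw [pow_add]; field_simp
        have hdd : (2:ℝ)^(j+k) / 2^j ≤ znorm (φ τ) / 2^j := by gcongr
        rw [he]
        linarith
      have hwle : w (φ τ) ≤ ((2:ℝ)^k) ^ E :=
        Real.rpow_le_rpow_of_nonpos (by positivity) hbk hE.le
      calc w (φ τ) ^ P ≤ (((2:ℝ)^k) ^ E) ^ P :=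
            Real.rpow_le_rpow (hw_pos _).le hwle hP.le
        _ = ((2:ℝ)^k) ^ (E*P) := by rw [← Real.rpow_mul (by positivity)]
    have hreal : ((2:ℝ)^k) ^ (E*P) * (Nnum d (j+k) : ℝ) ≤ K * r^k := by
      have hN : (Nnum d (j+k):ℝ) ≤ (2:ℝ)^((((j+k+4)*d:ℕ)):ℝ) := by
        calc (Nnum d (j+k):ℝ) ≤ ((2^((j+k+4)*d) : ℕ):ℝ) := by exact_mod_cast Nnum_le d (j+k)
          _ = _ := two_pow_nat_cast _
      calc ((2:ℝ)^k) ^ (E*P) * (Nnum d (j+k) : ℝ)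
          ≤ ((2:ℝ)^k) ^ (E*P) * (2:ℝ)^((((j+k+4)*d:ℕ)):ℝ) := by
            apply mul_le_mul_of_nonneg_left hN (Real.rpow_nonneg (by positivity) _)
        _ = (2:ℝ)^((k:ℝ)*(E*P) + (((j+k+4)*d:ℕ)):ℝ) := by
            rw [← Real.rpow_natCast 2 k, ← Real.rpow_mul (by norm_num), ← Real.rpow_add two_pos]
        _ ≤ (2:ℝ)^((5*(d:ℝ) + (j:ℝ)*(d:ℝ)) + ((d:ℝ) + E*P)*(k:ℝ)) := by
            apply Real.rpow_le_rpow_of_exponent_le one_le_two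
            push_cast
            nlinarith
        _ = K * r^k := by
            rw [Real.rpow_add two_pos, hKdef, hrdef, ← Real.rpow_natCast ((2:ℝ)^((d:ℝ)+E*P)) k,
              ← Real.rpow_mul (by norm_num)]
    calc ∑ τ ∈ Finset.Ico (Mnum d (j+k)) (Mnum d (j+k+1)), F (φ τ)
        ≤ ∑ τ ∈ Finset.Ico (Mnum d (j+k)) (Mnum d (j+k+1)),
            ENNReal.ofReal (((2:ℝ)^k) ^ (E*P) * |ξ j t (φ τ)| ^ P) := by
          apply Finset.sum_le_sum
          intro τ hτ
          apply ENNReal.ofReal_le_ofReal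
          rw [hsplit]
          exact mul_le_mul_of_nonneg_right (hwk τ hτ) (Real.rpow_nonneg (abs_nonneg _) _)
      _ = ENNReal.ofReal (((2:ℝ)^k) ^ (E*P) *
            ∑ τ ∈ Finset.Ico (Mnum d (j+k)) (Mnum d (j+k+1)), |ξ j t (φ τ)| ^ P) := by
          rw [Finset.mul_sum, ENNReal.ofReal_sum_of_nonneg]
          intro τ _
          exact mul_nonneg (Real.rpow_nonneg (by positivity) _) (Real.rpow_nonneg (abs_nonneg _) _)
      _ = ENNReal.ofReal (((2:ℝ)^k) ^ (E*P) * (Nnum d (j+k) : ℝ)) *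
            ENNReal.ofReal ((Nnum d (j+k) : ℝ)⁻¹ *
              ∑ τ ∈ Finset.Ico (Mnum d (j+k)) (Mnum d (j+k+1)), |ξ j t (φ τ)| ^ P) := by
          rw [← ENNReal.ofReal_mul (mul_nonneg (Real.rpow_nonneg (by positivity) _) hNpos.le)]
          congr 1
          field_simp
      _ ≤ ENNReal.ofReal (((2:ℝ)^k) ^ (E*P) * (Nnum d (j+k) : ℝ)) * Ξ :=
          mul_le_mul_right (le_XiQ_two d P φ ξ j (j+k) (Nat.le_add_right j k) t) _
      _ ≤ ENNReal.ofReal K * ENNReal.ofReal (r^k) * Ξ := by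
          apply mul_le_mul_left
          rw [← ENNReal.ofReal_mul hK0.le]
          exact ENNReal.ofReal_le_ofReal hreal
  -- geometric sum
  have hgeo : ∑ k ∈ Finset.range N, ENNReal.ofReal (r^k) ≤ ENNReal.ofReal ((1-r)⁻¹) := by
    have h1 : ∀ k : ℕ, ENNReal.ofReal (r^k) = (ENNReal.ofReal r)^k :=
      fun k => ENNReal.ofReal_pow hr0.le k
    calc ∑ k ∈ Finset.range N, ENNReal.ofReal (r^k)
        = ∑ k ∈ Finset.range N, (ENNReal.ofReal r)^k := by simp only [h1]
      _ ≤ ∑' k : ℕ, (ENNReal.ofReal r)^k := ENNReal.sum_le_tsum _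
      _ = (1 - ENNReal.ofReal r)⁻¹ := ENNReal.tsum_geometric _
      _ = ENNReal.ofReal ((1-r)⁻¹) := by
          rw [ENNReal.ofReal_inv_of_pos (by linarith : (0:ℝ) < 1 - r),
            ENNReal.ofReal_sub 1 hr0.le, ENNReal.ofReal_one]
  -- assemble
  calc ∑ τ ∈ Finset.range N, F (φ τ)
      ≤ ∑ τ ∈ Finset.range (Mnum d (j+N)), F (φ τ) :=
        Finset.sum_le_sum_of_subset (Finset.range_subset_range.2 (le_Mnum d hd j N))
    _ = ∑ τ ∈ Finset.range (Mnum d j), F (φ τ) +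
          ∑ k ∈ Finset.range N, ∑ τ ∈ Finset.Ico (Mnum d (j+k)) (Mnum d (j+k+1)), F (φ τ) :=
        sum_range_Mnum d j N _
    _ ≤ ENNReal.ofReal K * Ξ +
          ∑ k ∈ Finset.range N, ENNReal.ofReal K * ENNReal.ofReal (r^k) * Ξ :=
        add_le_add hcentral (Finset.sum_le_sum fun k _ => hblock k)
    _ = ENNReal.ofReal K * Ξ +
          ENNReal.ofReal K * (∑ k ∈ Finset.range N, ENNReal.ofReal (r^k)) * Ξ := by
        rw [Finset.mul_sum, Finset.sum_mul]
    _ ≤ ENNReal.ofReal K * Ξ + ENNReal.ofReal K * ENNReal.ofReal ((1-r)⁻¹) * Ξ := by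
        gcongr
    _ = ENNReal.ofReal (K * (1 + (1-r)⁻¹)) * Ξ := by
        rw [ENNReal.ofReal_mul hK0.le, ENNReal.ofReal_add (by norm_num)
          (inv_nonneg.2 (by linarith : (0:ℝ) ≤ 1-r)), ENNReal.ofReal_one]
        ring

def priorCoefCC (d : ℕ) (γ β P : ℝ) (j : ℕ) : ℝ :=
  ((2:ℝ)^(5*(d:ℝ)) * (1 + (1 - (2:ℝ)^((d:ℝ)+(if j=0 then γ else β)*P))⁻¹))^(1/P)

lemma g_algebra (dR jR s2 α θ P S : ℝ) (hP : 0 < P) (hS : 0 < S) (hj : 0 < jR + 1) :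
    (2:ℝ)^(jR*(s2 - dR*P⁻¹)) *
      (((2:ℝ)^(jR*α) * (jR+1)^θ)^P * ((2:ℝ)^(5*dR + jR*dR) * S))^(1/P)
    = (2:ℝ)^(jR*(s2+α)) * (jR+1)^θ * ((2:ℝ)^(5*dR) * S)^(1/P) := by
  have hjp : (0:ℝ) < (jR+1)^θ := Real.rpow_pos_of_pos hj θ
  have hc : (0:ℝ) < (2:ℝ)^(jR*α) * (jR+1)^θ :=
    mul_pos (Real.rpow_pos_of_pos two_pos _) hjp
  have hL : (2:ℝ)^(jR*(s2 - dR*P⁻¹)) *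
      (((2:ℝ)^(jR*α) * (jR+1)^θ)^P * ((2:ℝ)^(5*dR + jR*dR) * S))^(1/P)
      = (2:ℝ)^(jR*(s2 - dR*P⁻¹)) * ((2:ℝ)^(jR*α) * (2:ℝ)^((5*dR + jR*dR)*(1/P)))
          * ((jR+1)^θ * S^(1/P)) := by
    rw [Real.mul_rpow (Real.rpow_nonneg hc.le P) (by positivity),
      ← Real.rpow_mul hc.le, mul_one_div_cancel hP.ne', Real.rpow_one,
      Real.mul_rpow (by positivity) hS.le, ← Real.rpow_mul (by norm_num)]
    ring
  have hR : (2:ℝ)^(jR*(s2+α)) * (jR+1)^θ * ((2:ℝ)^(5*dR) * S)^(1/P)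
      = (2:ℝ)^(jR*(s2+α)) * (2:ℝ)^((5*dR)*(1/P)) * ((jR+1)^θ * S^(1/P)) := by
    rw [Real.mul_rpow (by positivity) hS.le, ← Real.rpow_mul (by norm_num)]
    ring
  rw [hL, hR, ← Real.rpow_add two_pos, ← Real.rpow_add two_pos, ← Real.rpow_add two_pos,
    show jR*(s2 - dR*P⁻¹) + (jR*α + (5*dR + jR*dR)*(1/P)) = jR*(s2+α) + (5*dR)*(1/P) by
      field_simp; ring]

lemma term_bound (d : ℕ) (hd : 0 < d) (s α β γ θ : ℝ) (p : ℝ≥0∞)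
    (hp0 : 0 < p) (hp : p ≠ ∞)
    (hγ : (d:ℝ) + γ * p.toReal < 0) (hβ : (d:ℝ) + β * p.toReal < 0)
    (φ : ℕ → Fin d → ℤ) (hb : Function.Bijective φ) (hm : Monotone fun τ => znorm (φ τ))
    (ξ : ℕ → (Fin d → Bool) → (Fin d → ℤ) → ℝ) (j : ℕ) (t : Fin d → Bool) :
    ENNReal.ofReal ((2:ℝ)^((j:ℝ)*(s + (d:ℝ)/2 - d*(p⁻¹).toReal))) *
      lpNorm p (fun m : Fin d → ℤ => ENNReal.ofReal |priorCoef d α β γ θ j m * ξ j t m|)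
    ≤ ENNReal.ofReal ((2:ℝ)^((j:ℝ)*(s + (d:ℝ)/2 + α)) * ((j:ℝ)+1)^θ *
        priorCoefCC d γ β p.toReal j) * (XiQ d p.toReal φ ξ)^(1/p.toReal) := by
  set P := p.toReal with hPdef
  have hP : 0 < P := ENNReal.toReal_pos hp0.ne' hp
  set E : ℝ := if j = 0 then γ else β with hEdef
  have hEd : (d:ℝ) + E * P < 0 := by
    rw [hEdef]; split <;> assumption
  set S : ℝ := 1 + (1 - (2:ℝ)^((d:ℝ)+E*P))⁻¹ with hSdef
  have hr1 : (2:ℝ)^((d:ℝ)+E*P) < 1 := Real.rpow_lt_one_of_one_lt_of_neg one_lt_two hEd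
  have hS : 0 < S := by
    have h0 : (0:ℝ) < (1 - (2:ℝ)^((d:ℝ)+E*P))⁻¹ :=
      inv_pos.2 (by linarith)
    rw [hSdef]
    linarith
  set c : ℝ := (2:ℝ)^((j:ℝ)*α) * ((j:ℝ)+1)^θ with hcdef
  have hc : 0 < c := mul_pos (Real.rpow_pos_of_pos two_pos _)
    (Real.rpow_pos_of_pos (by positivity) _)
  set w : (Fin d → ℤ) → ℝ := fun m => (1 + znorm m / 2^j)^E with hwdef
  set Ξ := XiQ d P φ ξ with hXidef
  -- rewrite the lp norm
  have hlp : lpNorm p (fun m : Fin d → ℤ => ENNReal.ofReal |priorCoef d α β γ θ j m * ξ j t m|)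
      = (∑' m : Fin d → ℤ, ENNReal.ofReal (c^P * |w m * ξ j t m| ^ P))^(1/P) := by
    rw [_root_.lpNorm, if_neg hp]
    congr 1
    apply tsum_congr
    intro m
    rw [ENNReal.ofReal_rpow_of_nonneg (abs_nonneg _) hP.le]
    congr 1
    have : priorCoef d α β γ θ j m * ξ j t m = c * (w m * ξ j t m) := by
      rw [priorCoef, hcdef, hwdef, hEdef]; ring
    rw [this, abs_mul, abs_of_pos hc, Real.mul_rpow hc.le (abs_nonneg _)]
  rw [hlp]
  have hsum : ∑' m : Fin d → ℤ, ENNReal.ofReal (c^P * |w m * ξ j t m| ^ P)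
      ≤ ENNReal.ofReal (c^P * ((2:ℝ)^(5*(d:ℝ) + (j:ℝ)*(d:ℝ)) * S)) * Ξ := by
    calc ∑' m : Fin d → ℤ, ENNReal.ofReal (c^P * |w m * ξ j t m| ^ P)
        = ENNReal.ofReal (c^P) * ∑' m : Fin d → ℤ, ENNReal.ofReal (|w m * ξ j t m| ^ P) := by
          rw [← ENNReal.tsum_mul_left]
          apply tsum_congr
          intro m
          rw [← ENNReal.ofReal_mul (Real.rpow_nonneg hc.le P)]
      _ ≤ ENNReal.ofReal (c^P) * (ENNReal.ofReal ((2:ℝ)^(5*(d:ℝ) + (j:ℝ)*(d:ℝ)) * S) * Ξ) :=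
          mul_le_mul_right (inner_sum_bound d hd P E hP hEd φ hb hm ξ j t) _
      _ = ENNReal.ofReal (c^P * ((2:ℝ)^(5*(d:ℝ) + (j:ℝ)*(d:ℝ)) * S)) * Ξ := by
          rw [ENNReal.ofReal_mul (Real.rpow_nonneg hc.le P), mul_assoc]
  calc ENNReal.ofReal ((2:ℝ)^((j:ℝ)*(s + (d:ℝ)/2 - d*(p⁻¹).toReal))) *
        (∑' m : Fin d → ℤ, ENNReal.ofReal (c^P * |w m * ξ j t m| ^ P))^(1/P)
      ≤ ENNReal.ofReal ((2:ℝ)^((j:ℝ)*(s + (d:ℝ)/2 - d*(p⁻¹).toReal))) *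
        ((ENNReal.ofReal (c^P * ((2:ℝ)^(5*(d:ℝ) + (j:ℝ)*(d:ℝ)) * S)) * Ξ)^(1/P)) :=
        mul_le_mul_right (ENNReal.rpow_le_rpow hsum (by positivity)) _
    _ = ENNReal.ofReal ((2:ℝ)^((j:ℝ)*(s + (d:ℝ)/2 - d*(p⁻¹).toReal)) *
          (c^P * ((2:ℝ)^(5*(d:ℝ) + (j:ℝ)*(d:ℝ)) * S))^(1/P)) * Ξ^(1/P) := by
        rw [ENNReal.mul_rpow_of_nonneg _ _ (by positivity),
          ENNReal.ofReal_rpow_of_nonneg (by positivity) (by positivity),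
          ← mul_assoc, ← ENNReal.ofReal_mul (by positivity)]
    _ = ENNReal.ofReal ((2:ℝ)^((j:ℝ)*(s + (d:ℝ)/2 + α)) * ((j:ℝ)+1)^θ *
          priorCoefCC d γ β P j) * Ξ^(1/P) := by
        congr 2
        have hiP : (p⁻¹).toReal = P⁻¹ := by rw [ENNReal.toReal_inv, hPdef]
        rw [hiP, priorCoefCC, ← hEdef, ← hSdef, hcdef]
        exact g_algebra (d:ℝ) (j:ℝ) (s + (d:ℝ)/2) α θ P S hP hS (by positivity)

instance (d : ℕ) : Nonempty (JIdx d) := ⟨⟨(0, fun _ => false), by simp⟩⟩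

lemma lpNorm_mono (q : ℝ≥0∞) {ι : Type*} {f g : ι → ℝ≥0∞} (h : ∀ i, f i ≤ g i) :
    lpNorm q f ≤ lpNorm q g := by
  rw [_root_.lpNorm, _root_.lpNorm]
  split
  · exact iSup_mono h
  · exact ENNReal.rpow_le_rpow
      (ENNReal.tsum_le_tsum fun i => ENNReal.rpow_le_rpow (h i) ENNReal.toReal_nonneg)
      (by positivity)

lemma lpNorm_mul_const (q : ℝ≥0∞) (hq : 0 < q) {ι : Type*} [Nonempty ι]
    (f : ι → ℝ≥0∞) (c : ℝ≥0∞) :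
    lpNorm q (fun i => f i * c) = lpNorm q f * c := by
  rw [_root_.lpNorm, _root_.lpNorm]
  split
  · exact (iSup_mul f c).symm
  · rename_i hqt
    have hQ : 0 < q.toReal := ENNReal.toReal_pos hq.ne' hqt
    have h1 : ∀ i, (f i * c) ^ q.toReal = f i ^ q.toReal * c ^ q.toReal :=
      fun i => ENNReal.mul_rpow_of_nonneg _ _ hQ.le
    simp only [h1]
    rw [ENNReal.tsum_mul_right, ENNReal.mul_rpow_of_nonneg _ _ (by positivity),
      ← ENNReal.rpow_mul, mul_one_div_cancel hQ.ne', ENNReal.rpow_one]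

lemma summable_aux (r : ℝ) (hr0 : 0 < r) (hr1 : r < 1) (x : ℝ) :
    Summable (fun j : ℕ => ((j:ℝ)+1)^x * r^j) := by
  obtain ⟨n, hx⟩ : ∃ n : ℕ, x ≤ (n:ℝ) := exists_nat_ge x
  have h2 : Summable (fun m : ℕ => (m:ℝ)^n * r^m) :=
    summable_pow_mul_geometric_of_norm_lt_one n
      (by rw [Real.norm_eq_abs, abs_of_pos hr0]; exact hr1)
  have h3 : Summable (fun j : ℕ => ((j+1:ℕ):ℝ)^n * r^(j+1)) :=
    (summable_nat_add_iff 1).2 h2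
  have h4 : Summable (fun j : ℕ => r⁻¹ * (((j+1:ℕ):ℝ)^n * r^(j+1))) := h3.mul_left r⁻¹
  have h5 : Summable (fun j : ℕ => ((j:ℝ)+1)^n * r^j) := by
    apply h4.congr
    intro j
    calc r⁻¹ * (((j+1:ℕ):ℝ)^n * r^(j+1))
        = ((j+1:ℕ):ℝ)^n * r^j * (r⁻¹ * r) := by rw [pow_succ]; ring
      _ = ((j:ℝ)+1)^n * r^j := by
          rw [inv_mul_cancel₀ hr0.ne', mul_one]
          push_cast
          ring
  apply Summable.of_nonneg_of_le _ _ h5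
  · intro j
    exact mul_nonneg (Real.rpow_nonneg (by positivity) _) (pow_nonneg hr0.le _)
  · intro j
    have hle : ((j:ℝ)+1)^x ≤ ((j:ℝ)+1)^n := by
      calc ((j:ℝ)+1)^x ≤ ((j:ℝ)+1)^(n:ℝ) :=
            Real.rpow_le_rpow_of_exponent_le (by linarith [Nat.cast_nonneg (α := ℝ) j]) hx
        _ = ((j:ℝ)+1)^n := Real.rpow_natCast _ n
    exact mul_le_mul_of_nonneg_right hle (pow_nonneg hr0.le j)

lemma summable_aux2 (x : ℝ) (hx : x < -1) : Summable (fun j : ℕ => ((j:ℝ)+1)^x) := by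
  have h1 : Summable (fun n : ℕ => (n:ℝ)^x) := Real.summable_nat_rpow.2 hx
  have h2 : Summable (fun j : ℕ => ((j+1:ℕ):ℝ)^x) := (summable_nat_add_iff 1).2 h1
  apply h2.congr
  intro j
  push_cast
  ring_nf

lemma lpNorm_top_bound (d : ℕ) (v : ℕ → ℝ) (C : ℝ) (hC : ∀ j, v j ≤ C) :
    lpNorm ∞ (fun jt : JIdx d => ENNReal.ofReal (v jt.1.1)) ≤ ENNReal.ofReal C := by
  rw [_root_.lpNorm, if_pos rfl]
  exact iSup_le fun jt => ENNReal.ofReal_le_ofReal (hC _)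

lemma lpNorm_lt_top_bound (d : ℕ) (q : ℝ≥0∞) (hq0 : 0 < q) (hq : q ≠ ∞) (v : ℕ → ℝ)
    (hv0 : ∀ j, 0 ≤ v j) (hsum : Summable (fun j => v j ^ q.toReal)) :
    lpNorm q (fun jt : JIdx d => ENNReal.ofReal (v jt.1.1)) ≤
      ENNReal.ofReal (((2:ℝ)^d * ∑' j : ℕ, v j ^ q.toReal) ^ (1/q.toReal)) := by
  set Q := q.toReal with hQdef
  have hQ : 0 < Q := ENNReal.toReal_pos hq0.ne' hq
  rw [_root_.lpNorm, if_neg hq]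
  have h1 : ∀ jt : JIdx d, (ENNReal.ofReal (v jt.1.1))^Q = ENNReal.ofReal (v jt.1.1 ^ Q) :=
    fun jt => ENNReal.ofReal_rpow_of_nonneg (hv0 _) hQ.le
  calc (∑' jt : JIdx d, (ENNReal.ofReal (v jt.1.1))^Q)^(1/Q)
      ≤ (∑' y : ℕ × (Fin d → Bool), ENNReal.ofReal (v y.1 ^ Q))^(1/Q) := by
        apply ENNReal.rpow_le_rpow _ (by positivity)
        simp only [h1]
        exact tsum_comp_le_tsum_of_injective (Subtype.val_injective)
          (fun y : ℕ × (Fin d → Bool) => ENNReal.ofReal (v y.1 ^ Q))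
    _ = ((2^d : ℝ≥0∞) * ∑' j : ℕ, ENNReal.ofReal (v j ^ Q))^(1/Q) := by
        congr 1
        rw [ENNReal.tsum_prod' (f := fun y : ℕ × (Fin d → Bool) => ENNReal.ofReal (v y.1 ^ Q)),
          ← ENNReal.tsum_mul_left]
        apply tsum_congr
        intro j
        rw [tsum_fintype]
        simp only [Finset.sum_const, Finset.card_univ, nsmul_eq_mul]
        congr 1
        rw [Fintype.card_fun]
        simp
    _ = ENNReal.ofReal (((2:ℝ)^d * ∑' j : ℕ, v j ^ Q) ^ (1/Q)) := by
        rw [← ENNReal.ofReal_tsum_of_nonneg (fun j => Real.rpow_nonneg (hv0 j) Q) hsum,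
          show ((2:ℝ≥0∞)^d) = ENNReal.ofReal ((2:ℝ)^d) by
            rw [ENNReal.ofReal_pow (by norm_num : (0:ℝ) ≤ 2)]; norm_num,
          ← ENNReal.ofReal_mul (by positivity),
          ENNReal.ofReal_rpow_of_nonneg _ (by positivity)]
        have ht : 0 ≤ ∑' j : ℕ, v j ^ Q := tsum_nonneg (fun j => Real.rpow_nonneg (hv0 j) Q)
        positivity

/-- norm lemma. Let `p ∈ (0,∞)`, `q ∈ (0,∞]` and assume Property A.
Then there is `C > 0`, independent of the family `(ξ_{j,t,m})`, such that the sequence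
`a_{j,t,m} = 2^{jα}(j+1)^θ (1+‖m‖_∞/2^j)^{β+(γ-β)𝟙_{j=0}} ξ_{j,t,m}` satisfies
`‖a‖_{b^s_{p,q}} ≤ C · Ξ^{1/p}`. -/
theorem stmt1 (d : ℕ) (hd : 0 < d) (s α β γ θ : ℝ) (p q : ℝ≥0∞)
    (hp0 : 0 < p) (hp : p ≠ ∞) (hq : 0 < q)
    (hA : PropertyA d s α β γ θ p q) :
    ∃ C : ℝ, 0 < C ∧
      ∀ φ : ℕ → Fin d → ℤ, Function.Bijective φ →
        Monotone (fun τ => znorm (φ τ)) →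
        ∀ ξ : ℕ → (Fin d → Bool) → (Fin d → ℤ) → ℝ,
          besovNorm d s p q (fun j t m => priorCoef d α β γ θ j m * ξ j t m)
            ≤ ENNReal.ofReal C * XiQ d p.toReal φ ξ ^ (1 / p.toReal) := by
  obtain ⟨h1, h2, h3⟩ := hA
  rw [if_neg hp] at h1 h2
  set P := p.toReal with hPdef
  have hP : 0 < P := ENNReal.toReal_pos hp0.ne' hp
  have hdiv : (d:ℝ)/P*P = d := div_mul_cancel₀ _ hP.ne'
  have hγ2 : (d:ℝ) + γ * P < 0 := by
    have h := mul_lt_mul_of_pos_right h1 hP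
    rw [neg_mul, hdiv] at h
    linarith
  have hβ2 : (d:ℝ) + β * P < 0 := by
    have h := mul_lt_mul_of_pos_right h2 hP
    rw [neg_mul, hdiv] at h
    linarith
  set σ : ℝ := s + (d:ℝ)/2 + α with hσdef
  -- the constant Km dominating priorCoefCC
  set Km : ℝ := max (priorCoefCC d γ β P 0) (priorCoefCC d γ β P 1) with hKmdef
  have hCCpos : ∀ j : ℕ, 0 < priorCoefCC d γ β P j := by
    intro j
    rw [priorCoefCC]
    apply Real.rpow_pos_of_pos
    have hr1 : (2:ℝ)^((d:ℝ)+(if j=0 then γ else β)*P) < 1 := by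
      apply Real.rpow_lt_one_of_one_lt_of_neg one_lt_two
      split <;> assumption
    have : (0:ℝ) < (1 - (2:ℝ)^((d:ℝ)+(if j=0 then γ else β)*P))⁻¹ := inv_pos.2 (by linarith)
    have h2pos : (0:ℝ) < (2:ℝ)^(5*(d:ℝ)) := Real.rpow_pos_of_pos two_pos _
    nlinarith
  have hKm : 0 < Km := lt_max_of_lt_left (hCCpos 0)
  have hCCle : ∀ j : ℕ, priorCoefCC d γ β P j ≤ Km := by
    intro j
    rcases Nat.eq_zero_or_pos j with hj | hj
    · subst hj; exact le_max_left _ _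
    · have : priorCoefCC d γ β P j = priorCoefCC d γ β P 1 := by
        rw [priorCoefCC, priorCoefCC, if_neg hj.ne', if_neg one_ne_zero]
      rw [this]; exact le_max_right _ _
  set v : ℕ → ℝ := fun j => (2:ℝ)^((j:ℝ)*σ) * ((j:ℝ)+1)^θ * Km with hvdef
  have hv0 : ∀ j, 0 ≤ v j := by
    intro j
    have := Real.rpow_pos_of_pos (two_pos) ((j:ℝ)*σ)
    have := Real.rpow_pos_of_pos (by positivity : (0:ℝ) < (j:ℝ)+1) θ
    positivity
  -- the main pointwise bound
  have hmain : ∀ (φ : ℕ → Fin d → ℤ), Function.Bijective φ →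
      Monotone (fun τ => znorm (φ τ)) →
      ∀ ξ : ℕ → (Fin d → Bool) → (Fin d → ℤ) → ℝ,
        besovNorm d s p q (fun j t m => priorCoef d α β γ θ j m * ξ j t m)
          ≤ lpNorm q (fun jt : JIdx d => ENNReal.ofReal (v jt.1.1)) *
              XiQ d P φ ξ ^ (1/P) := by
    intro φ hb hm ξ
    rw [besovNorm, ← lpNorm_mul_const q hq]
    apply lpNorm_mono
    intro jt
    refine le_trans (term_bound d hd s α β γ θ p hp0 hp hγ2 hβ2 φ hb hm ξ jt.1.1 jt.1.2) ?_
    apply mul_le_mul_left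
    apply ENNReal.ofReal_le_ofReal
    rw [hvdef]
    have hnn : (0:ℝ) ≤ (2:ℝ)^((jt.1.1:ℝ)*σ) * ((jt.1.1:ℝ)+1)^θ := by
      have := Real.rpow_pos_of_pos (two_pos) ((jt.1.1:ℝ)*σ)
      have := Real.rpow_pos_of_pos (by positivity : (0:ℝ) < (jt.1.1:ℝ)+1) θ
      positivity
    calc (2:ℝ)^((jt.1.1:ℝ)*(s + (d:ℝ)/2 + α)) * ((jt.1.1:ℝ)+1)^θ * priorCoefCC d γ β P jt.1.1
        = (2:ℝ)^((jt.1.1:ℝ)*σ) * ((jt.1.1:ℝ)+1)^θ * priorCoefCC d γ β P jt.1.1 := by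
          rw [hσdef]
      _ ≤ (2:ℝ)^((jt.1.1:ℝ)*σ) * ((jt.1.1:ℝ)+1)^θ * Km :=
          mul_le_mul_of_nonneg_left (hCCle _) hnn
  -- bound the outer lp norm by a constant
  have houter : ∃ C0 : ℝ, lpNorm q (fun jt : JIdx d => ENNReal.ofReal (v jt.1.1)) ≤
      ENNReal.ofReal C0 := by
    by_cases hqt : q = ∞
    · subst hqt
      rw [if_pos rfl] at h3
      rcases h3 with hσ | ⟨hσ0, hθ⟩
      · set rr : ℝ := (2:ℝ)^σ with hrrdef
        have hrr0 : 0 < rr := Real.rpow_pos_of_pos two_pos _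
        have hrr1 : rr < 1 := Real.rpow_lt_one_of_one_lt_of_neg one_lt_two hσ
        have hsum := summable_aux rr hrr0 hrr1 θ
        refine ⟨(∑' j : ℕ, ((j:ℝ)+1)^θ * rr^j) * Km, lpNorm_top_bound d v _ ?_⟩
        intro j
        have hterm : v j = ((j:ℝ)+1)^θ * rr^j * Km := by
          simp only [hvdef, hrrdef]
          rw [← Real.rpow_natCast ((2:ℝ)^σ) j, ← Real.rpow_mul (by norm_num : (0:ℝ) ≤ 2),
            show σ*(j:ℝ) = (j:ℝ)*σ from mul_comm _ _]
          ring
        rw [hterm]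
        apply mul_le_mul_of_nonneg_right _ hKm.le
        exact Summable.le_tsum hsum j (fun b _ =>
          mul_nonneg (Real.rpow_nonneg (by positivity) _) (pow_nonneg hrr0.le _))
      · refine ⟨Km, lpNorm_top_bound d v _ ?_⟩
        intro j
        simp only [hvdef, hσ0, mul_zero, Real.rpow_zero, one_mul]
        have hle1 : ((j:ℝ)+1)^θ ≤ 1 :=
          Real.rpow_le_one_of_one_le_of_nonpos (by linarith [Nat.cast_nonneg (α := ℝ) j]) hθ
        calc ((j:ℝ)+1)^θ * Km ≤ 1 * Km := mul_le_mul_of_nonneg_right hle1 hKm.le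
          _ = Km := one_mul Km
    · rw [if_neg hqt] at h3
      set Q := q.toReal with hQdef
      have hQ : 0 < Q := ENNReal.toReal_pos hq.ne' hqt
      have hvq : ∀ j : ℕ, v j ^ Q = ((j:ℝ)+1)^(θ*Q) * ((2:ℝ)^(σ*Q))^j * Km^Q := by
        intro j
        have h2nn : (0:ℝ) ≤ (2:ℝ)^((j:ℝ)*σ) := Real.rpow_nonneg (by norm_num) _
        have hjnn : (0:ℝ) ≤ ((j:ℝ)+1)^θ := Real.rpow_nonneg (by positivity) _
        have hj0 : (0:ℝ) ≤ (j:ℝ)+1 := by positivity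
        simp only [hvdef]
        rw [Real.mul_rpow (mul_nonneg h2nn hjnn) hKm.le, Real.mul_rpow h2nn hjnn]
        have e2 : ((2:ℝ)^((j:ℝ)*σ))^Q = ((2:ℝ)^(σ*Q))^(j:ℕ) := by
          rw [← Real.rpow_natCast ((2:ℝ)^(σ*Q)) j, ← Real.rpow_mul (by norm_num : (0:ℝ) ≤ 2),
            ← Real.rpow_mul (by norm_num : (0:ℝ) ≤ 2)]
          congr 1
          ring
        have e3 : (((j:ℝ)+1)^θ)^Q = ((j:ℝ)+1)^(θ*Q) := (Real.rpow_mul hj0 θ Q).symm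
        rw [e2, e3]
        ring
      have hsumQ : Summable (fun j => v j ^ Q) := by
        rcases h3 with hσ | ⟨hσ0, hθ⟩
        · have hσQ : σ * Q < 0 := mul_neg_of_neg_of_pos hσ hQ
          have hrq0 : 0 < (2:ℝ)^(σ*Q) := Real.rpow_pos_of_pos two_pos _
          have hrq1 : (2:ℝ)^(σ*Q) < 1 := Real.rpow_lt_one_of_one_lt_of_neg one_lt_two hσQ
          have hs := (summable_aux ((2:ℝ)^(σ*Q)) hrq0 hrq1 (θ*Q)).mul_right (Km^Q)
          exact hs.congr (fun j => (hvq j).symm)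
        · have hθQ : θ * Q < -1 := by
            have h := mul_lt_mul_of_pos_right hθ hQ
            rw [neg_mul, one_div, inv_mul_cancel₀ hQ.ne'] at h
            linarith
          have hs := (summable_aux2 (θ*Q) hθQ).mul_right (Km^Q)
          apply hs.congr
          intro j
          rw [hvq j, hσ0, zero_mul, Real.rpow_zero, one_pow, mul_one]
      exact ⟨((2:ℝ)^d * ∑' j : ℕ, v j ^ Q)^(1/Q),
        lpNorm_lt_top_bound d q hq hqt v hv0 hsumQ⟩
  obtain ⟨C0, hC0⟩ := houter
  refine ⟨max 1 C0, lt_max_of_lt_left one_pos, ?_⟩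
  intro φ hb hm ξ
  refine (hmain φ hb hm ξ).trans ?_
  apply mul_le_mul_left
  exact hC0.trans (ENNReal.ofReal_le_ofReal (le_max_right 1 C0))

end
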